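/- arXiv:2510.00599 — 2 statements merged into one kernel-verified Lean document; each statement's English description precedes it below -/
import Mathlib

section
/- Let (U_i, c_i) for i = 1,...,n be metric spaces, and equip U = U_1 × ... × U_n with the metric c(u,u') = (Σ_i c_i(u_i,u'_i)^p)^{1/p} for p ≥ 1. If P = ⊗_i P_i and Q = ⊗_i Q_i are product probability measures with P_i, Q_i ∈ P(U_i) having finite p-th moments, then the p-Wasserstein distance tensorizes: W_c(P,Q)^p = Σ_{i=1}^n W_{c_i}(P_i, Q_i)^p. -/
open MeasureTheory ENNReal

/-- The set of couplings of two measures. -/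
def couplings {X : Type*} [MeasurableSpace X] (P Q : Measure X) : Set (Measure (X × X)) :=
  {π | π.map Prod.fst = P ∧ π.map Prod.snd = Q}

/-- Optimal transport cost for a given (already `p`-th-powered) cost function. -/
noncomputable def transportCost {X : Type*} [MeasurableSpace X]
    (cost : X × X → ℝ≥0∞) (P Q : Measure X) : ℝ≥0∞ :=
  ⨅ π ∈ couplings P Q, ∫⁻ z, cost z ∂π

section AuxWT

variable {ι : Type*}

lemma auxWT_pi_map_eval [Fintype ι] {α : ι → Type*} [∀ i, MeasurableSpace (α i)]
    (μ : ∀ i, Measure (α i)) [∀ i, IsProbabilityMeasure (μ i)] (i : ι) :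
    (Measure.pi μ).map (Function.eval i) = μ i := by
  classical
  ext s hs
  rw [Measure.map_apply (measurable_pi_apply i) hs, Set.eval_preimage, Measure.pi_pi]
  rw [Finset.prod_eq_single i (fun j _ hj => by rw [Function.update_of_ne hj]; simp)
    (by simp)]
  simp

lemma auxWT_sum_lintegral_le {α : Type*} [MeasurableSpace α] (μ : Measure α)
    (s : Finset ι) (f : ι → α → ℝ≥0∞) :
    ∑ i ∈ s, ∫⁻ a, f i a ∂μ ≤ ∫⁻ a, ∑ i ∈ s, f i a ∂μ := by
  classical
  induction s using Finset.induction with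
  | empty => simp
  | insert _ _ hi ih =>
    rename_i a s
    simp_rw [Finset.sum_insert hi]
    exact le_trans (add_le_add_right ih _) (le_lintegral_add _ _)

lemma auxWT_lintegral_le_of_le_add {α : Type*} [MeasurableSpace α] (μ : Measure α)
    [IsProbabilityMeasure μ] {φ f : α → ℝ≥0∞} (hφ : Measurable φ) (K : ℝ≥0∞)
    (h : ∀ a, φ a ≤ f a + K) :
    ∫⁻ a, φ a ∂μ ≤ (∫⁻ a, f a ∂μ) + K := by
  calc ∫⁻ a, φ a ∂μ ≤ ∫⁻ a, (φ a - K) + K ∂μ := lintegral_mono fun a => le_tsub_add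
    _ = (∫⁻ a, φ a - K ∂μ) + K * μ Set.univ := by
        rw [lintegral_add_right _ measurable_const, lintegral_const]
    _ ≤ (∫⁻ a, f a ∂μ) + K := by
        rw [measure_univ, mul_one]
        exact add_le_add_left (lintegral_mono fun a => tsub_le_iff_right.mpr (h a)) K

lemma auxWT_marginal_le {n : ℕ} {α : Fin n → Type*} [∀ i, MeasurableSpace (α i)]
    (π : ∀ i, Measure (α i)) [∀ i, IsProbabilityMeasure (π i)]
    (c : ∀ i, α i → ℝ≥0∞) (ψ : (∀ i, α i) → ℝ≥0∞) (hψ : Measurable ψ)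
    (hle : ∀ x, ψ x ≤ ∑ i, c i (x i)) (s : Finset (Fin n)) (x : ∀ i, α i) :
    MeasureTheory.lmarginal π s ψ x
      ≤ (∑ i ∈ s, ∫⁻ a, c i a ∂(π i)) + ∑ i ∈ sᶜ, c i (x i) := by
  classical
  induction s using Finset.induction generalizing x with
  | empty =>
    simpa [MeasureTheory.lmarginal_empty] using (hle x).trans_eq (by simp)
  | insert _ _ hi ih =>
    rename_i i s
    have hsc : (sᶜ : Finset (Fin n)) = insert i ((insert i s)ᶜ) := by
      rw [Finset.compl_insert, Finset.insert_erase (Finset.mem_compl.mpr hi)]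
    rw [MeasureTheory.lmarginal_insert _ hψ hi]
    have key : ∀ xᵢ, MeasureTheory.lmarginal π s ψ (Function.update x i xᵢ)
        ≤ c i xᵢ + ((∑ j ∈ s, ∫⁻ a, c j a ∂(π j)) + ∑ j ∈ (insert i s)ᶜ, c j (x j)) := by
      intro xᵢ
      refine (ih _).trans (le_of_eq ?_)
      have h1 : ∑ j ∈ sᶜ, c j (Function.update x i xᵢ j)
          = c i xᵢ + ∑ j ∈ (insert i s)ᶜ, c j (x j) := by
        rw [hsc, Finset.sum_insert (by simp), Function.update_self]
        congr 1
        refine Finset.sum_congr rfl fun j hj => ?_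
        have : j ≠ i := by
          intro h; rw [h] at hj; simp at hj
        rw [Function.update_of_ne this]
      rw [h1]; ring
    have hmeas : Measurable fun xᵢ => MeasureTheory.lmarginal π s ψ (Function.update x i xᵢ) :=
      (Measurable.lmarginal π hψ).comp (measurable_update x)
    refine (auxWT_lintegral_le_of_le_add (π i) hmeas _ key).trans (le_of_eq ?_)
    rw [Finset.sum_insert hi]; ring

end AuxWT

/-- Tensorization of the `p`-Wasserstein distance for product measures:
with `U = U₁ × ⋯ × Uₙ` equipped with `c(u,u') = (∑ᵢ cᵢ(uᵢ,u'ᵢ)^p)^{1/p}`, and product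
probability measures `P = ⊗ᵢ Pᵢ`, `Q = ⊗ᵢ Qᵢ` with finite `p`-th moments,
`W_c(P,Q)^p = ∑ᵢ W_{cᵢ}(Pᵢ,Qᵢ)^p`. -/
theorem wasserstein_tensorization {n : ℕ} {U : Fin n → Type*}
    [∀ i, MeasurableSpace (U i)] [∀ i, MetricSpace (U i)] [∀ i, BorelSpace (U i)]
    (p : ℝ) (hp : 1 ≤ p)
    (P Q : ∀ i, Measure (U i))
    [∀ i, IsProbabilityMeasure (P i)] [∀ i, IsProbabilityMeasure (Q i)]
    (hPmom : ∀ i, ∃ u₀ : U i, ∫⁻ u, ENNReal.ofReal (dist u u₀ ^ p) ∂(P i) < ⊤)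
    (hQmom : ∀ i, ∃ u₀ : U i, ∫⁻ u, ENNReal.ofReal (dist u u₀ ^ p) ∂(Q i) < ⊤) :
    transportCost
      (fun z : (∀ i, U i) × (∀ i, U i) =>
        ENNReal.ofReal ((∑ i, dist (z.1 i) (z.2 i) ^ p) ^ (1 / p)) ^ p)
      (Measure.pi P) (Measure.pi Q)
    = ∑ i, transportCost (fun z : U i × U i => ENNReal.ofReal (dist z.1 z.2 ^ p))
        (P i) (Q i) := by
  classical
  have hp0 : 0 < p := lt_of_lt_of_le one_pos hp
  set C : ∀ i, U i × U i → ℝ≥0∞ := fun i z => ENNReal.ofReal (dist z.1 z.2 ^ p) with hC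
  -- Step 0: simplify the cost function
  have hfun : (fun z : (∀ i, U i) × (∀ i, U i) =>
      ENNReal.ofReal ((∑ i, dist (z.1 i) (z.2 i) ^ p) ^ (1 / p)) ^ p)
      = fun z => ∑ i, C i (z.1 i, z.2 i) := by
    funext z
    have hs : (0:ℝ) ≤ ∑ i, dist (z.1 i) (z.2 i) ^ p :=
      Finset.sum_nonneg fun i _ => Real.rpow_nonneg dist_nonneg _
    rw [ENNReal.ofReal_rpow_of_nonneg (Real.rpow_nonneg hs _) hp0.le,
      ← Real.rpow_mul hs, one_div, inv_mul_cancel₀ hp0.ne', Real.rpow_one,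
      ENNReal.ofReal_sum_of_nonneg fun i _ => Real.rpow_nonneg dist_nonneg _]
  rw [hfun]
  -- projections
  have hf : ∀ i, Measurable fun z : (∀ j, U j) × (∀ j, U j) => (z.1 i, z.2 i) := fun i =>
    ((measurable_pi_apply i).comp measurable_fst).prodMk
      ((measurable_pi_apply i).comp measurable_snd)
  refine le_antisymm ?_ ?_
  · -- ≤ : construct product couplings from near-optimal coordinate couplings
    refine ENNReal.le_of_forall_pos_le_add fun ε hε hfin => ?_
    set δ : ℝ≥0∞ := (ε : ℝ≥0∞) / n with hδdef
    have hδ : 0 < δ := ENNReal.div_pos (by exact_mod_cast hε.ne') (by simp)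
    have hTfin : ∀ i, transportCost (C i) (P i) (Q i) ≠ ∞ := by
      intro i
      exact ne_top_of_le_ne_top hfin.ne (Finset.single_le_sum (f := fun i =>
        transportCost (C i) (P i) (Q i)) (fun j _ => by simp) (Finset.mem_univ i))
    have hex : ∀ i, ∃ π ∈ couplings (P i) (Q i),
        ∫⁻ z, C i z ∂π < transportCost (C i) (P i) (Q i) + δ := by
      intro i
      have hlt : transportCost (C i) (P i) (Q i)
          < transportCost (C i) (P i) (Q i) + δ :=
        ENNReal.lt_add_right (hTfin i) hδ.ne'
      have := hlt
      rw [transportCost] at this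
      obtain ⟨π', hlt2⟩ := iInf_lt_iff.mp this
      obtain ⟨hmem', hlt3⟩ := iInf_lt_iff.mp hlt2
      exact ⟨π', hmem', hlt3⟩
    choose π hπmem hπint using hex
    have hπP : ∀ i, (π i).map Prod.fst = P i := fun i => (hπmem i).1
    have hπQ : ∀ i, (π i).map Prod.snd = Q i := fun i => (hπmem i).2
    haveI hprob : ∀ i, IsProbabilityMeasure (π i) := by
      intro i
      constructor
      have := congrArg (fun m : Measure (U i) => m Set.univ) (hπP i)
      simp only [Measure.map_apply measurable_fst MeasurableSet.univ, Set.preimage_univ] at this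
      rw [this]; exact measure_univ
    set μ : Measure (∀ i, U i × U i) := Measure.pi π with hμ
    set e : (∀ i, U i × U i) → (∀ i, U i) × (∀ i, U i) :=
      fun f => (fun i => (f i).1, fun i => (f i).2) with hedef
    have he : Measurable e :=
      (measurable_pi_lambda _ fun i => (measurable_pi_apply i).fst).prodMk
        (measurable_pi_lambda _ fun i => (measurable_pi_apply i).snd)
    have hmem : μ.map e ∈ couplings (Measure.pi P) (Measure.pi Q) := by
      constructor
      · rw [Measure.map_map measurable_fst he]
        exact (measurePreserving_pi π P fun i => ⟨measurable_fst, hπP i⟩).map_eq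
      · rw [Measure.map_map measurable_snd he]
        exact (measurePreserving_pi π Q fun i => ⟨measurable_snd, hπQ i⟩).map_eq
    have hne : ∀ i, Nonempty (U i × U i) := by
      intro i
      by_contra h
      rw [not_nonempty_iff] at h
      have h1 : (π i) Set.univ = 1 := measure_univ
      rw [Set.univ_eq_empty_iff.mpr h, measure_empty] at h1
      exact zero_ne_one h1
    have x₀ : ∀ i, U i × U i := fun i => Classical.arbitrary _
    calc transportCost (fun z : (∀ i, U i) × (∀ i, U i) => ∑ i, C i (z.1 i, z.2 i)) (Measure.pi P) (Measure.pi Q)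
        ≤ ∫⁻ z, ∑ i, C i (z.1 i, z.2 i) ∂(μ.map e) := by
          rw [transportCost]
          exact iInf₂_le _ hmem
      _ ≤ ∫⁻ f, ∑ i, C i (f i) ∂μ := lintegral_map_le _ _
      _ ≤ ∑ i, ∫⁻ z, C i z ∂(π i) := by
          obtain ⟨g, hgm, hgle, hgeq⟩ :=
            exists_measurable_le_lintegral_eq μ (fun f => ∑ i, C i (f i))
          rw [hgeq, lintegral_eq_lmarginal_univ x₀]
          refine (auxWT_marginal_le π C g hgm (fun x => (hgle x).trans le_rfl)
            Finset.univ x₀).trans ?_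
          simp
      _ ≤ ∑ i, (transportCost (C i) (P i) (Q i) + δ) :=
          Finset.sum_le_sum fun i _ => (hπint i).le
      _ ≤ (∑ i, transportCost (C i) (P i) (Q i)) + ε := by
          rw [Finset.sum_add_distrib]
          refine add_le_add_right ?_ _
          simp only [Finset.sum_const, Finset.card_univ, Fintype.card_fin, nsmul_eq_mul, hδdef]
          exact ENNReal.mul_div_le
  · -- ≥ : project couplings to coordinates
    rw [transportCost]
    refine le_iInf₂ fun π hπ => ?_
    have hmem : ∀ i, π.map (fun z : (∀ j, U j) × (∀ j, U j) => (z.1 i, z.2 i))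
        ∈ couplings (P i) (Q i) := by
      intro i
      constructor
      · rw [Measure.map_map measurable_fst (hf i)]
        have : (Prod.fst ∘ fun z : (∀ j, U j) × (∀ j, U j) => (z.1 i, z.2 i))
            = Function.eval i ∘ (Prod.fst : (∀ j, U j) × (∀ j, U j) → ∀ j, U j) := rfl
        rw [this, ← Measure.map_map (measurable_pi_apply i) measurable_fst, hπ.1,
          auxWT_pi_map_eval]
      · rw [Measure.map_map measurable_snd (hf i)]
        have : (Prod.snd ∘ fun z : (∀ j, U j) × (∀ j, U j) => (z.1 i, z.2 i))
            = Function.eval i ∘ (Prod.snd : (∀ j, U j) × (∀ j, U j) → ∀ j, U j) := rfl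
        rw [this, ← Measure.map_map (measurable_pi_apply i) measurable_snd, hπ.2,
          auxWT_pi_map_eval]
    calc ∑ i, transportCost (C i) (P i) (Q i)
        ≤ ∑ i, ∫⁻ w, C i w ∂(π.map fun z : (∀ j, U j) × (∀ j, U j) => (z.1 i, z.2 i)) := by
          refine Finset.sum_le_sum fun i _ => ?_
          rw [transportCost]
          exact iInf₂_le _ (hmem i)
      _ ≤ ∑ i, ∫⁻ z, C i (z.1 i, z.2 i) ∂π :=
          Finset.sum_le_sum fun i _ => lintegral_map_le _ _
      _ ≤ ∫⁻ z, ∑ i, C i (z.1 i, z.2 i) ∂π := auxWT_sum_lintegral_le π _ _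
end

section
/- Let X and Y be real random variables with continuous, compactly supported, bounded density functions. Then the differential entropy is continuous under small additive perturbation: for every ε > 0 there exists Δ > 0 such that for all 0 < δ < Δ, |H(X + δY) − H(X)| < ε. -/
open MeasureTheory Filter Topology

/-- Differential entropy of a density `h` on `ℝ`: `H(h) = -∫ h log h`. -/
noncomputable def diffEntropy (h : ℝ → ℝ) : ℝ := -∫ x, h x * Real.log (h x)

/-- Change of variables for the scaled convolution. -/
lemma conv_rep (f g : ℝ → ℝ) (δ x : ℝ) (hδ : 0 < δ) :
    (∫ y, f y * ((1 / δ) * g ((x - y) / δ))) = ∫ u, f (x - δ * u) * g u := by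
  have h1 : (∫ y, f y * ((1 / δ) * g ((x - y) / δ)))
      = (1/δ) * ∫ y, f y * g ((x - y) / δ) := by
    rw [← integral_const_mul]
    congr 1; ext y; ring
  have h2 : (∫ u, f (x - δ * u) * g u)
      = |δ⁻¹| • ∫ t, f (x - t) * g (t / δ) := by
    rw [← Measure.integral_comp_mul_left (fun t => f (x - t) * g (t / δ)) δ]
    congr 1; ext u
    rw [show δ * u / δ = u by field_simp]
  have h3 : (∫ t, f (x - t) * g (t / δ)) = ∫ y, f y * g ((x - y) / δ) := by
    have := integral_sub_left_eq_self (fun y => f y * g ((x - y) / δ)) volume x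
    simpa using this
  rw [h1, h2, h3, abs_of_pos (inv_pos.mpr hδ), smul_eq_mul, one_div]

/-- Let `X, Y` be independent real random variables with continuous, compactly
supported, bounded densities `f, g`; the density of `X + δY` is `f_δ = f * g_δ`. Then the
differential entropy is continuous under small additive perturbations: for every `ε > 0`
there is `Δ > 0` such that `|H(X + δY) − H(X)| < ε` for all `0 < δ < Δ`. -/
theorem entropy_continuous_under_perturbation
    (f g : ℝ → ℝ)
    (hfc : Continuous f) (hfs : HasCompactSupport f) (hf0 : ∀ x, 0 ≤ f x)
    (hf1 : ∫ x, f x = 1)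
    (hgc : Continuous g) (hgs : HasCompactSupport g) (hg0 : ∀ y, 0 ≤ g y)
    (hg1 : ∫ y, g y = 1) :
    ∀ ε > 0, ∃ Δ > 0, ∀ δ : ℝ, 0 < δ → δ < Δ →
      |diffEntropy (fun x => ∫ y, f y * ((1 / δ) * g ((x - y) / δ))) - diffEntropy f| < ε := by
  -- a common support radius
  obtain ⟨R, hR1, hfR, hgR⟩ : ∃ R : ℝ, 1 ≤ R ∧ (∀ x, R < |x| → f x = 0) ∧
      (∀ x, R < |x| → g x = 0) := by
    obtain ⟨r₁, hr₁⟩ := hfs.isCompact.isBounded.subset_closedBall 0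
    obtain ⟨r₂, hr₂⟩ := hgs.isCompact.isBounded.subset_closedBall 0
    refine ⟨max 1 (max r₁ r₂), le_max_left _ _, ?_, ?_⟩
    · intro x hx
      by_contra h
      have hx' : x ∈ Metric.closedBall (0:ℝ) r₁ := hr₁ (subset_tsupport f h)
      rw [Metric.mem_closedBall, Real.dist_eq, sub_zero] at hx'
      exact absurd (hx'.trans ((le_max_left r₁ r₂).trans (le_max_right 1 _))) (not_le.mpr hx)
    · intro x hx
      by_contra h
      have hx' : x ∈ Metric.closedBall (0:ℝ) r₂ := hr₂ (subset_tsupport g h)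
      rw [Metric.mem_closedBall, Real.dist_eq, sub_zero] at hx'
      exact absurd (hx'.trans ((le_max_right r₁ r₂).trans (le_max_right 1 _))) (not_le.mpr hx)
  have hR0 : (0:ℝ) < R := lt_of_lt_of_le one_pos hR1
  -- a uniform bound on f
  obtain ⟨M₀, hM₀⟩ := hfs.exists_bound_of_continuous hfc
  set M : ℝ := max M₀ 0 with hMdef
  have hM0 : 0 ≤ M := le_max_right _ _
  have hM : ∀ x, f x ≤ M := by
    intro x
    have : |f x| ≤ M₀ := by rw [← Real.norm_eq_abs]; exact hM₀ x
    exact le_trans (le_trans (le_abs_self _) this) (le_max_left _ _)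
  -- basic integrability
  have intg : Integrable g := hgc.integrable_of_hasCompactSupport hgs
  have key_cont : ∀ (x δ : ℝ), Continuous (fun u => f (x - δ * u) * g u) := fun x δ =>
    (hfc.comp (by fun_prop)).mul hgc
  have key_supp : ∀ (x δ : ℝ), HasCompactSupport (fun u => f (x - δ * u) * g u) := by
    intro x δ
    exact (HasCompactSupport.mul_left hgs : HasCompactSupport fun u => f (x - δ * u) * g u)
  have key_int : ∀ (x δ : ℝ), Integrable (fun u => f (x - δ * u) * g u) := fun x δ =>
    (key_cont x δ).integrable_of_hasCompactSupport (key_supp x δ)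
  -- the approximated density
  set F : ℝ → ℝ → ℝ := fun δ x => ∫ u, f (x - δ * u) * g u with hFdef
  have F0 : ∀ δ x, 0 ≤ F δ x := fun δ x =>
    integral_nonneg fun u => mul_nonneg (hf0 _) (hg0 _)
  have FM : ∀ δ x, F δ x ≤ M := by
    intro δ x
    have : F δ x ≤ ∫ u, M * g u :=
      integral_mono (key_int x δ) (intg.const_mul M)
        (fun u => mul_le_mul_of_nonneg_right (hM _) (hg0 _))
    simpa [integral_const_mul, hg1] using this
  have Fcont : ∀ δ : ℝ, Continuous (F δ) := by
    intro δ
    apply continuous_of_dominated (bound := fun u => M * g u)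
    · intro x; exact (key_int x δ).aestronglyMeasurable
    · intro x
      filter_upwards with u
      rw [Real.norm_eq_abs, abs_mul, abs_of_nonneg (hf0 _), abs_of_nonneg (hg0 _)]
      exact mul_le_mul_of_nonneg_right (hM _) (hg0 _)
    · exact intg.const_mul M
    · filter_upwards with u
      exact (hfc.comp (by fun_prop)).mul continuous_const
  have Fsupp : ∀ δ : ℝ, 0 < δ → δ ≤ 1 → ∀ x : ℝ, 2 * R < |x| → F δ x = 0 := by
    intro δ hδ hδ1 x hx
    have : ∀ u : ℝ, f (x - δ * u) * g u = 0 := by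
      intro u
      by_cases hu : R < |u|
      · rw [hgR u hu, mul_zero]
      · push_neg at hu
        have h1 : R < |x - δ * u| := by
          have h2 : |δ * u| ≤ R := by
            rw [abs_mul, abs_of_pos hδ]
            calc δ * |u| ≤ 1 * R := by
                  apply mul_le_mul hδ1 hu (abs_nonneg _) zero_le_one
            _ = R := one_mul R
          have := abs_sub_abs_le_abs_sub x (δ * u)
          nlinarith [abs_nonneg (x - δ * u)]
        rw [hfR _ h1, zero_mul]
    simp only [hFdef, this, integral_zero]
  -- uniform continuity inputs
  have ucf : UniformContinuous f :=
    hfc.uniformContinuous_of_tendsto_cocompact hfs.is_zero_at_infty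
  have ucφ : UniformContinuousOn (fun t => t * Real.log t) (Set.Icc (-1) (M + 1)) :=
    isCompact_Icc.uniformContinuousOn_of_continuous Real.continuous_mul_log.continuousOn
  intro ε hε
  -- choose the moduli
  set ε' : ℝ := ε / (4 * R + 1) with hε'def
  have hε' : 0 < ε' := div_pos hε (by linarith)
  obtain ⟨η, hη, hηP⟩ := Metric.uniformContinuousOn_iff.mp ucφ ε' hε'
  obtain ⟨η₂, hη₂, hη₂P⟩ := Metric.uniformContinuous_iff.mp ucf (η/2) (by linarith)
  refine ⟨min 1 (η₂ / R), lt_min one_pos (div_pos hη₂ hR0), ?_⟩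
  intro δ hδ hδΔ
  have hδ1 : δ ≤ 1 := le_of_lt (lt_of_lt_of_le hδΔ (min_le_left _ _))
  have hδR : δ * R < η₂ := by
    have := lt_of_lt_of_le hδΔ (min_le_right _ _)
    calc δ * R < (η₂ / R) * R := by nlinarith
    _ = η₂ := div_mul_cancel₀ _ hR0.ne'
  -- rewrite the convolution
  have hfun : (fun x => ∫ y, f y * ((1 / δ) * g ((x - y) / δ))) = F δ :=
    funext fun x => conv_rep f g δ x hδ
  rw [hfun]
  -- the uniform estimate on F δ - f
  have Fclose : ∀ x : ℝ, |F δ x - f x| ≤ η / 2 := by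
    intro x
    have hconst : Integrable (fun u => f x * g u) := intg.const_mul (f x)
    have hrw : F δ x - f x = ∫ u, (f (x - δ * u) - f x) * g u := by
      have : (∫ u, (f (x - δ * u) - f x) * g u)
          = (∫ u, f (x - δ * u) * g u) - ∫ u, f x * g u := by
        rw [← integral_sub (key_int x δ) hconst]
        congr 1; ext u; ring
      rw [this, integral_const_mul, hg1, mul_one]
    rw [hrw]
    have hb : ∀ u : ℝ, ‖(f (x - δ * u) - f x) * g u‖ ≤ (η / 2) * g u := by
      intro u
      by_cases hu : R < |u|
      · rw [hgR u hu, mul_zero, mul_zero, norm_zero]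
      · push_neg at hu
        rw [Real.norm_eq_abs, abs_mul, abs_of_nonneg (hg0 u)]
        apply mul_le_mul_of_nonneg_right _ (hg0 u)
        have hd : dist (x - δ * u) x < η₂ := by
          rw [Real.dist_eq]
          have : |x - δ * u - x| = δ * |u| := by
            rw [show x - δ * u - x = -(δ * u) by ring, abs_neg, abs_mul, abs_of_pos hδ]
          rw [this]
          calc δ * |u| ≤ δ * R := by nlinarith
          _ < η₂ := hδR
        have := hη₂P hd
        rw [Real.dist_eq] at this
        exact le_of_lt this
    calc |∫ u, (f (x - δ * u) - f x) * g u| ≤ ∫ u, (η / 2) * g u := by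
          rw [← Real.norm_eq_abs]
          apply norm_integral_le_of_norm_le ((intg.const_mul (η/2)))
          filter_upwards with u using hb u
    _ = η / 2 := by rw [integral_const_mul, hg1, mul_one]
  -- pointwise bound on the entropy integrand difference
  set K : Set ℝ := Set.Icc (-(2*R)) (2*R) with hKdef
  have hme : ∀ x : ℝ, f x ∈ Set.Icc (-1 : ℝ) (M + 1) := fun x =>
    ⟨by linarith [hf0 x], by linarith [hM x]⟩
  have hmeF : ∀ x : ℝ, F δ x ∈ Set.Icc (-1 : ℝ) (M + 1) := fun x =>
    ⟨by linarith [F0 δ x], by linarith [FM δ x]⟩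
  have ptw : ∀ x : ℝ, ‖F δ x * Real.log (F δ x) - f x * Real.log (f x)‖
      ≤ K.indicator (fun _ => ε') x := by
    intro x
    by_cases hx : x ∈ K
    · rw [Set.indicator_of_mem hx]
      have hd : dist (F δ x) (f x) < η := by
        rw [Real.dist_eq]; linarith [Fclose x]
      have := hηP _ (hmeF x) _ (hme x) hd
      rw [Real.dist_eq] at this
      rw [Real.norm_eq_abs]
      exact le_of_lt this
    · rw [Set.indicator_of_notMem hx]
      have hx' : 2 * R < |x| := by
        by_contra hc
        push_neg at hc
        exact hx (Set.mem_Icc.mpr (abs_le.mp hc))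
      have h2 : f x = 0 := hfR x (by linarith [hR0])
      have h3 : F δ x = 0 := Fsupp δ hδ hδ1 x hx'
      simp [h2, h3]
  -- integrability of the entropy integrands
  have intf : Integrable (fun x => f x * Real.log (f x)) := by
    have h1 : HasCompactSupport ((fun t => t * Real.log t) ∘ f) :=
      hfs.comp_left (by simp)
    exact (Real.continuous_mul_log.comp hfc).integrable_of_hasCompactSupport h1
  have intF : Integrable (fun x => F δ x * Real.log (F δ x)) := by
    apply Continuous.integrable_of_hasCompactSupport
    · exact Real.continuous_mul_log.comp (Fcont δ)
    · apply HasCompactSupport.intro (isCompact_Icc (a := -(2*R)) (b := 2*R))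
      intro x hx
      have hx' : 2 * R < |x| := by
        by_contra hc
        push_neg at hc
        exact hx (Set.mem_Icc.mpr (abs_le.mp hc))
      rw [Fsupp δ hδ hδ1 x hx']
      simp
  -- final computation
  have hvol : volume K < ⊤ := by rw [hKdef]; exact measure_Icc_lt_top
  have hKint : Integrable (K.indicator (fun _ => ε')) := by
    have h1 : IntegrableOn (fun _ : ℝ => ε') K := (integrableOn_const_iff).mpr (Or.inr hvol)
    exact h1.integrable_indicator measurableSet_Icc
  have hbound : |(∫ x, F δ x * Real.log (F δ x)) - ∫ x, f x * Real.log (f x)|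
      ≤ ε' * (4 * R) := by
    rw [← integral_sub intF intf]
    calc |∫ x, (F δ x * Real.log (F δ x) - f x * Real.log (f x))|
        ≤ ∫ x, K.indicator (fun _ => ε') x := by
          rw [← Real.norm_eq_abs]
          apply norm_integral_le_of_norm_le hKint
          filter_upwards with x using ptw x
    _ = ε' * (4 * R) := by
        rw [integral_indicator_const _ measurableSet_Icc, Real.volume_real_Icc_of_le (by linarith), smul_eq_mul]
        ring
  have hlt : ε' * (4 * R) < ε := by
    have h4 : ε' * (4 * R + 1) = ε := div_mul_cancel₀ _ (by linarith)
    nlinarith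
  rw [diffEntropy, diffEntropy]
  calc |(-∫ x, F δ x * Real.log (F δ x)) - -∫ x, f x * Real.log (f x)|
      = |(∫ x, F δ x * Real.log (F δ x)) - ∫ x, f x * Real.log (f x)| := by
        rw [← abs_neg]; congr 1; ring
  _ ≤ ε' * (4 * R) := hbound
  _ < ε := hlt
end
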